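/- arXiv:1306.5866 — 4 statements merged into one kernel-verified Lean document; each statement's English description precedes it below -/
import Mathlib

section
/- For every real t with 0 < t ≤ 1, (8(1+t))^(1/4) · t^(1/8) ≤ 1 + √t, with equality if and only if t = 1. -/
/-!
With `s = √t` the left-hand side is the fourth root of `8 (1 + s²) s`, and
`(1 + s)⁴ = 8 (1 + s²) s + (1 - s)⁴`; so the inequality holds, with equality exactly when `s = 1`.
-/

open Real

theorem one_add_pow_four_eq {R : Type*} [CommRing R] (s : R) :
    (1 + s) ^ 4 = 8 * (1 + s ^ 2) * s + (1 - s) ^ 4 := by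
  ring

theorem eight_mul_one_add_sq_mul_le (s : ℝ) : 8 * (1 + s ^ 2) * s ≤ (1 + s) ^ 4 := by
  rw [one_add_pow_four_eq]
  exact le_add_of_nonneg_right (by positivity)

theorem eight_mul_one_add_sq_mul_eq_iff (s : ℝ) : 8 * (1 + s ^ 2) * s = (1 + s) ^ 4 ↔ s = 1 := by
  rw [one_add_pow_four_eq, left_eq_add, pow_eq_zero_iff four_ne_zero, sub_eq_zero, eq_comm]

namespace Real

variable {a b : ℝ} {n : ℕ}

theorem rpow_inv_natCast_le_iff (ha : 0 ≤ a) (hb : 0 ≤ b) (hn : n ≠ 0) :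
    a ^ (n⁻¹ : ℝ) ≤ b ↔ a ≤ b ^ n := by
  rw [rpow_inv_le_iff_of_pos ha hb (by positivity), rpow_natCast]

theorem rpow_inv_natCast_eq_iff (ha : 0 ≤ a) (hb : 0 ≤ b) (hn : n ≠ 0) :
    a ^ (n⁻¹ : ℝ) = b ↔ a = b ^ n := by
  rw [rpow_inv_eq ha hb (by positivity), rpow_natCast]

end Real

theorem rpow_quarter_mul_rpow_eighth {t : ℝ} (ht : 0 ≤ t) :
    (8 * (1 + t)) ^ ((1 : ℝ)/4) * t ^ ((1 : ℝ)/8) = (8 * (1 + √t ^ 2) * √t) ^ ((4 : ℕ)⁻¹ : ℝ) := by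
  have h_eighth : t ^ ((1 : ℝ)/8) = √t ^ ((1 : ℝ)/4) := by
    rw [sqrt_eq_rpow, ← rpow_mul ht]
    norm_num
  rw [h_eighth, ← mul_rpow (by positivity) (sqrt_nonneg t), sq_sqrt ht]
  norm_num

theorem stmt_1_general (t : ℝ) (ht0 : 0 < t) :
    (8 * (1 + t)) ^ ((1 : ℝ)/4) * t ^ ((1 : ℝ)/8) ≤ 1 + Real.sqrt t ∧
    ((8 * (1 + t)) ^ ((1 : ℝ)/4) * t ^ ((1 : ℝ)/8) = 1 + Real.sqrt t ↔ t = 1) := by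
  have hs : 0 ≤ √t := sqrt_nonneg t
  have ha : 0 ≤ 8 * (1 + √t ^ 2) * √t := by positivity
  rw [rpow_quarter_mul_rpow_eighth ht0.le, rpow_inv_natCast_le_iff ha (by positivity) four_ne_zero,
    rpow_inv_natCast_eq_iff ha (by positivity) four_ne_zero, eight_mul_one_add_sq_mul_eq_iff,
    sqrt_eq_one]
  exact ⟨eight_mul_one_add_sq_mul_le _, Iff.rfl⟩

theorem stmt_1 (t : ℝ) (ht0 : 0 < t) (ht1 : t ≤ 1) :
    (8 * (1 + t)) ^ ((1 : ℝ)/4) * t ^ ((1 : ℝ)/8) ≤ 1 + Real.sqrt t ∧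
    ((8 * (1 + t)) ^ ((1 : ℝ)/4) * t ^ ((1 : ℝ)/8) = 1 + Real.sqrt t ↔ t = 1) :=
  stmt_1_general t ht0
end

section
/- Let -1 < α ≤ β < 1 and define C₁ = (1/2)·((((1-α²)^(1/4) + (1-β²)^(1/4)) / (((1-α)(1+β))^(1/4) + ((1+α)(1-β))^(1/4)))⁴. Then C₁ ≤ (1/4)·(√((1+α)(1+β)) + √((1-α)(1-β))). -/
/-!
Write `1 + α = p⁴`, `1 - α = q⁴`, `1 + β = r⁴`, `1 - β = s⁴` and put `C = (p²r² + q²s²)/2`,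
`S = (q²r² + p²s²)/2`, `g = pqrs`. In the parametrisation `p² = √2 cos θ`, `q² = √2 sin θ`,
`r² = √2 cos φ`, `s² = √2 sin φ` these are `C = cos (θ - φ)`, `S = sin (θ + φ)` and
`g² = sin 2θ sin 2φ = C² + S² - 1`, while `(pq + rs)² = 2(SC + g)` and `(qr + ps)² = 2(S + g)`.
The claim thus becomes `(SC + g)² ≤ C (S + g)²`, and the difference of the two sides is
`(1 - C)² (1 + C - S²) ≥ 0`.
-/

theorem sq_mul_add_le_mul_sq_add {C S g : ℝ} (hS : S ^ 2 ≤ 1 + C)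
    (hg : g ^ 2 = C ^ 2 + S ^ 2 - 1) : (S * C + g) ^ 2 ≤ C * (S + g) ^ 2 := by
  have h : C * (S + g) ^ 2 - (S * C + g) ^ 2 = (1 - C) ^ 2 * (1 + C - S ^ 2) := by
    linear_combination (C - 1) * hg
  linarith [mul_nonneg (sq_nonneg (1 - C)) (sub_nonneg.2 hS)]

theorem two_mul_add_pow_four_le {p q r s : ℝ}
    (hpq : p ^ 4 + q ^ 4 = 2) (hrs : r ^ 4 + s ^ 4 = 2) :
    2 * (p * q + r * s) ^ 4 ≤ (p ^ 2 * r ^ 2 + q ^ 2 * s ^ 2) * (q * r + p * s) ^ 4 := by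
  set C := (p ^ 2 * r ^ 2 + q ^ 2 * s ^ 2) / 2
  set S := (q ^ 2 * r ^ 2 + p ^ 2 * s ^ 2) / 2
  set g := p * q * r * s
  have hu : (p * q + r * s) ^ 2 = 2 * (S * C + g) := by
    linear_combination (-(r ^ 2 * s ^ 2) / 2) * hpq - (p ^ 2 * q ^ 2 / 2) * hrs
  have hv : (q * r + p * s) ^ 2 = 2 * (S + g) := by ring
  -- Lagrange's identity, giving `S ≤ 1`
  have hSD : S ^ 2 + ((q ^ 2 * s ^ 2 - p ^ 2 * r ^ 2) / 2) ^ 2 = 1 := by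
    linear_combination ((r ^ 4 + s ^ 4) / 4) * hpq + (1 / 2) * hrs
  have hS1 : S ^ 2 ≤ 1 + C := by
    have hC : 0 ≤ C := by positivity
    linarith [sq_nonneg ((q ^ 2 * s ^ 2 - p ^ 2 * r ^ 2) / 2)]
  have hg2 : g ^ 2 = C ^ 2 + S ^ 2 - 1 := by
    linear_combination (-(r ^ 4 + s ^ 4) / 4) * hpq - (1 / 2) * hrs
  calc
    2 * (p * q + r * s) ^ 4 = 2 * ((p * q + r * s) ^ 2) ^ 2 := by ring
    _ = 8 * (S * C + g) ^ 2 := by rw [hu]; ring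
    _ ≤ 8 * (C * (S + g) ^ 2) := by gcongr; exact sq_mul_add_le_mul_sq_add hS1 hg2
    _ = 2 * C * ((q * r + p * s) ^ 2) ^ 2 := by rw [hv]; ring
    _ = _ := by ring

theorem Real.rpow_one_div_four_pow_four {x : ℝ} (hx : 0 ≤ x) : (x ^ (1 / 4 : ℝ)) ^ 4 = x := by
  rw [← Real.rpow_mul_natCast hx]; norm_num

theorem Real.sqrt_eq_rpow_one_div_four_sq {x : ℝ} (hx : 0 ≤ x) : √x = (x ^ (1 / 4 : ℝ)) ^ 2 := by
  rw [Real.sqrt_eq_rpow, ← Real.rpow_mul_natCast hx]; norm_num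

theorem half_mul_div_pow_four_le_quarter_mul_sqrt_add {a b c d : ℝ}
    (ha : 0 ≤ a) (hb : 0 ≤ b) (hc : 0 ≤ c) (hd : 0 ≤ d) (hab : a + b = 2) (hcd : c + d = 2) :
    1 / 2 * (((a * b) ^ (1 / 4 : ℝ) + (c * d) ^ (1 / 4 : ℝ)) /
      ((b * c) ^ (1 / 4 : ℝ) + (a * d) ^ (1 / 4 : ℝ))) ^ 4 ≤ 1 / 4 * (√(a * c) + √(b * d)) := by
  rw [Real.mul_rpow ha hb, Real.mul_rpow hc hd, Real.mul_rpow hb hc, Real.mul_rpow ha hd,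
    Real.sqrt_mul ha, Real.sqrt_mul hb, Real.sqrt_eq_rpow_one_div_four_sq ha,
    Real.sqrt_eq_rpow_one_div_four_sq hb, Real.sqrt_eq_rpow_one_div_four_sq hc,
    Real.sqrt_eq_rpow_one_div_four_sq hd]
  have key := two_mul_add_pow_four_le (p := a ^ (1 / 4 : ℝ)) (q := b ^ (1 / 4 : ℝ))
    (r := c ^ (1 / 4 : ℝ)) (s := d ^ (1 / 4 : ℝ))
    (by rwa [Real.rpow_one_div_four_pow_four ha, Real.rpow_one_div_four_pow_four hb])
    (by rwa [Real.rpow_one_div_four_pow_four hc, Real.rpow_one_div_four_pow_four hd])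
  have hratio := div_le_of_le_mul₀ (by positivity) (by positivity) key
  rw [mul_div_assoc] at hratio
  rw [div_pow]
  linarith

theorem stmt_8 (α β : ℝ) (h1 : -1 < α) (h2 : α ≤ β) (h3 : β < 1)
    (C₁ : ℝ)
    (hC₁ : C₁ = (1/2) * (((1 - α ^ 2) ^ ((1 : ℝ)/4) + (1 - β ^ 2) ^ ((1 : ℝ)/4)) /
      (((1 - α) * (1 + β)) ^ ((1 : ℝ)/4) + ((1 + α) * (1 - β)) ^ ((1 : ℝ)/4))) ^ 4) :
    C₁ ≤ (1/4) * (Real.sqrt ((1 + α) * (1 + β)) + Real.sqrt ((1 - α) * (1 - β))) := by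
  rw [hC₁, show 1 - α ^ 2 = (1 + α) * (1 - α) by ring, show 1 - β ^ 2 = (1 + β) * (1 - β) by ring]
  exact half_mul_div_pow_four_le_quarter_mul_sqrt_add (by linarith) (by linarith) (by linarith)
    (by linarith) (by ring) (by ring)
end

section
/- Let -1 < α < β < 1 and ξ > 1. Set S = sqrt((1+ξ)(1-α)/(2(ξ-α))), C = sqrt((ξ-1)(1+α)/(2(ξ-α))), D = sqrt((ξ-β)(1+α)/((1+β)(ξ-α))), s = sqrt((1-α)/2), c = sqrt((1+α)/2), d = sqrt((1+α)/(1+β)). Then |S·c·d - s·C·D| / (S·c·d + s·C·D) = |√((1+ξ)(ξ-α)) - √((ξ-1)(ξ-β))| / (√((1+ξ)(ξ-α)) + √((ξ-1)(ξ-β))). -/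
/-!
Both products factor through the same positive constant `√k`, where
`k = (1 - α) (1 + α)² / (4 (ξ - α)² (1 + β))`:
`S c d = √k √((1 + ξ)(ξ - α))` and `s C D = √k √((ξ - 1)(ξ - β))`,
so `√k` cancels from the ratio.
-/

lemma Real.sqrt_mul_sqrt_mul_sqrt {x y : ℝ} (hx : 0 ≤ x) (hy : 0 ≤ y) (z : ℝ) :
    Real.sqrt x * Real.sqrt y * Real.sqrt z = Real.sqrt (x * y * z) := by
  rw [← Real.sqrt_mul hx, ← Real.sqrt_mul (mul_nonneg hx hy)]

lemma abs_mul_sub_mul_div_mul_add_mul {K : ℝ} (hK : 0 < K) (a b : ℝ) :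
    |K * a - K * b| / (K * a + K * b) = |a - b| / (a + b) := by
  rw [← mul_sub, ← mul_add, abs_mul, abs_of_pos hK, mul_div_mul_left _ _ hK.ne']

theorem stmt_13 (α β ξ : ℝ) (h1 : -1 < α) (h2 : α < β) (h3 : β < 1) (h4 : 1 < ξ)
    (S C D s c d : ℝ)
    (hS : S = Real.sqrt ((1 + ξ) * (1 - α) / (2 * (ξ - α))))
    (hC : C = Real.sqrt ((ξ - 1) * (1 + α) / (2 * (ξ - α))))
    (hD : D = Real.sqrt ((ξ - β) * (1 + α) / ((1 + β) * (ξ - α))))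
    (hs : s = Real.sqrt ((1 - α) / 2))
    (hc : c = Real.sqrt ((1 + α) / 2))
    (hd : d = Real.sqrt ((1 + α) / (1 + β))) :
    |S * c * d - s * C * D| / (S * c * d + s * C * D)
      = |Real.sqrt ((1 + ξ) * (ξ - α)) - Real.sqrt ((ξ - 1) * (ξ - β))| /
        (Real.sqrt ((1 + ξ) * (ξ - α)) + Real.sqrt ((ξ - 1) * (ξ - β))) := by
  have hα : 0 < 1 + α := by linarith
  have hα' : 0 < 1 - α := by linarith
  have hβ : 0 < 1 + β := by linarith
  have hξα : 0 < ξ - α := by linarith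
  have hξβ : 0 < ξ - β := by linarith
  have hξ : 0 < ξ - 1 := by linarith
  have hξ' : 0 < 1 + ξ := by linarith
  set k : ℝ := (1 - α) * (1 + α) ^ 2 / (4 * (ξ - α) ^ 2 * (1 + β))
  have hk : 0 < k := by positivity
  have hScd : S * c * d = Real.sqrt k * Real.sqrt ((1 + ξ) * (ξ - α)) := by
    rw [hS, hc, hd, Real.sqrt_mul_sqrt_mul_sqrt (by positivity) (by positivity),
      ← Real.sqrt_mul hk.le]
    congr 1
    simp only [k]
    field_simp
    ring
  have hsCD : s * C * D = Real.sqrt k * Real.sqrt ((ξ - 1) * (ξ - β)) := by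
    rw [hs, hC, hD, Real.sqrt_mul_sqrt_mul_sqrt (by positivity) (by positivity),
      ← Real.sqrt_mul hk.le]
    congr 1
    simp only [k]
    field_simp
    ring
  rw [hScd, hsCD, abs_mul_sub_mul_div_mul_add_mul (Real.sqrt_pos.mpr hk)]
end

section
/- Let -1 < α < β < 1 and ξ > 1. Then (2ξ - ξα + ξβ - α - β) > 0 and the quantity B₂ defined as the product of [(2ξ-ξα+ξβ-α-β)·((1+α)(1-β)/((1-α)(1+β)))^(1/4) + 2√((ξ-α)(ξ-β)) - (β-α)√(ξ²-1)] / [(2ξ-ξα+ξβ-α-β)·((1+α)(1-β)/((1-α)(1+β)))^(1/4) + 2√((ξ-α)(ξ-β)) + (β-α)√(ξ²-1)] with |√((1+ξ)(ξ-α)) - √((ξ-1)(ξ-β))| / (√((1+ξ)(ξ-α)) + √((ξ-1)(ξ-β))) satisfies 0 ≤ B₂ < 1. -/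
/-! Both factors of `B₂` have the shape `(c - d) / (c + d)` with `0 < d ≤ c`, or `|a - b| / (a + b)`
with `a, b > 0`, so each lies in `[0, 1)`. For the first factor, `d ≤ c` comes from
`(β - α) √(ξ² - 1) < 2 √((ξ - α)(ξ - β))`, whose squared form is a product of two positive
linear factors in `ξ`, one of them being `2ξ - ξα + ξβ - α - β`. -/

lemma sub_div_add_nonneg_and_lt_one {c d : ℝ} (hd : 0 < d) (hdc : d ≤ c) :
    0 ≤ (c - d) / (c + d) ∧ (c - d) / (c + d) < 1 := by
  have hcd : 0 < c + d := by linarith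
  exact ⟨div_nonneg (by linarith) hcd.le, (div_lt_one hcd).2 (by linarith)⟩

lemma abs_sub_div_add_lt_one {a b : ℝ} (ha : 0 < a) (hb : 0 < b) : |a - b| / (a + b) < 1 := by
  rw [div_lt_one (by linarith), abs_lt]
  constructor <;> linarith

lemma two_mul_sub_mul_add_mul_sub_sub_pos {α β ξ : ℝ} (hα : α < 1) (hβ : -1 < β) (hξ : 1 < ξ) :
    0 < 2*ξ - ξ*α + ξ*β - α - β := by
  nlinarith

lemma four_mul_sub_mul_sub_sub_sq_mul (α β ξ : ℝ) :
    4 * ((ξ - α) * (ξ - β)) - (β - α) ^ 2 * (ξ ^ 2 - 1) =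
      (2*ξ - ξ*α + ξ*β - α - β) * (2*ξ - ξ*β + ξ*α - β - α) := by
  ring

lemma sub_mul_sqrt_lt_two_mul_sqrt {α β ξ : ℝ} (hα₀ : -1 < α) (hα₁ : α < 1) (hβ₀ : -1 < β)
    (hβ₁ : β < 1) (hξ : 1 < ξ) :
    (β - α) * √(ξ ^ 2 - 1) < 2 * √((ξ - α) * (ξ - β)) := by
  refine lt_of_pow_lt_pow_left₀ 2 (by positivity) ?_
  rw [mul_pow, mul_pow, Real.sq_sqrt (by nlinarith), Real.sq_sqrt (by nlinarith)]
  have := mul_pos (two_mul_sub_mul_add_mul_sub_sub_pos hα₁ hβ₀ hξ)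
    (two_mul_sub_mul_add_mul_sub_sub_pos hβ₁ hα₀ hξ)
  linarith [four_mul_sub_mul_sub_sub_sq_mul α β ξ]

theorem stmt_18 (α β ξ : ℝ) (h1 : -1 < α) (h2 : α < β) (h3 : β < 1) (h4 : 1 < ξ)
    (B₂ : ℝ)
    (hB₂ : B₂ =
      (((2*ξ - ξ*α + ξ*β - α - β) * ((1 + α) * (1 - β) / ((1 - α) * (1 + β))) ^ ((1 : ℝ)/4)
          + 2 * Real.sqrt ((ξ - α) * (ξ - β)) - (β - α) * Real.sqrt (ξ ^ 2 - 1)) /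
        ((2*ξ - ξ*α + ξ*β - α - β) * ((1 + α) * (1 - β) / ((1 - α) * (1 + β))) ^ ((1 : ℝ)/4)
          + 2 * Real.sqrt ((ξ - α) * (ξ - β)) + (β - α) * Real.sqrt (ξ ^ 2 - 1))) *
      (|Real.sqrt ((1 + ξ) * (ξ - α)) - Real.sqrt ((ξ - 1) * (ξ - β))| /
        (Real.sqrt ((1 + ξ) * (ξ - α)) + Real.sqrt ((ξ - 1) * (ξ - β))))) :
    0 < 2*ξ - ξ*α + ξ*β - α - β ∧ 0 ≤ B₂ ∧ B₂ < 1 := by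
  have hα₁ : α < 1 := h2.trans h3
  have hβ₀ : -1 < β := h1.trans h2
  have hD := two_mul_sub_mul_add_mul_sub_sub_pos hα₁ hβ₀ h4
  have hr : 0 ≤ ((1 + α) * (1 - β) / ((1 - α) * (1 + β))) ^ ((1 : ℝ)/4) :=
    Real.rpow_nonneg (by apply div_nonneg <;> nlinarith) _
  obtain ⟨hF₁_nonneg, hF₁_lt_one⟩ := sub_div_add_nonneg_and_lt_one
    (c := (2*ξ - ξ*α + ξ*β - α - β) * ((1 + α) * (1 - β) / ((1 - α) * (1 + β))) ^ ((1 : ℝ)/4)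
      + 2 * √((ξ - α) * (ξ - β))) (d := (β - α) * √(ξ ^ 2 - 1))
    (mul_pos (sub_pos.2 h2) (Real.sqrt_pos.2 (by nlinarith)))
    (by linarith [sub_mul_sqrt_lt_two_mul_sqrt h1 hα₁ hβ₀ h3 h4, mul_nonneg hD.le hr])
  have hF₂_lt_one := abs_sub_div_add_lt_one (Real.sqrt_pos.2 (by nlinarith : 0 < (1 + ξ) * (ξ - α)))
    (Real.sqrt_pos.2 (by nlinarith : 0 < (ξ - 1) * (ξ - β)))
  subst hB₂
  exact ⟨hD, mul_nonneg hF₁_nonneg (by positivity),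
    mul_lt_one_of_nonneg_of_lt_one_left hF₁_nonneg hF₁_lt_one hF₂_lt_one.le⟩
end
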